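/- arXiv:2504.00344 — 4 statements merged into one kernel-verified Lean document; each statement's English description precedes it below -/
import Mathlib

section
/- Let q > 0, 0 < m < 1, h > 0, A = 1 - qm > 0, B = √(A² - 4h) with A² - 4h > 0, and x₆ = (A-B)/2. Set h₁ = m - (q+1)m². If m ≥ A/2, or if m < A/2 and h < h₁, then x₆ < m; if m < A/2 and h > h₁ then x₆ > m; if m < A/2 and h = h₁ then x₆ = m. -/
theorem stmt_8 (q m h : ℝ) (hq : 0 < q) (hm : 0 < m) (hm1 : m < 1)
    (hh : 0 < h) (A : ℝ) (hA : A = 1 - q*m) (hA0 : 0 < A)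
    (hdisc : 0 < A^2 - 4*h) (B : ℝ) (hB : B = Real.sqrt (A^2 - 4*h))
    (x₆ : ℝ) (hx : x₆ = (A - B)/2) (h₁ : ℝ) (hh₁ : h₁ = m - (q+1)*m^2) :
    ((m ≥ A/2 ∨ (m < A/2 ∧ h < h₁)) → x₆ < m) ∧
    (m < A/2 ∧ h > h₁ → x₆ > m) ∧
    (m < A/2 ∧ h = h₁ → x₆ = m) := by
  have hBsq : B^2 = A^2 - 4*h := by
    rw [hB, Real.sq_sqrt hdisc.le]
  have hBpos : 0 < B := by
    rw [hB]; exact Real.sqrt_pos.mpr hdisc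
  have key : (A - 2*m)^2 = B^2 + 4*(h - h₁) := by
    rw [hBsq, hh₁, hA]; ring
  refine ⟨?_, ?_, ?_⟩
  · rintro (hge | ⟨hlt, hlth⟩)
    · nlinarith
    · nlinarith [sq_nonneg (B - (A - 2*m))]
  · rintro ⟨hlt, hgt⟩
    nlinarith [sq_nonneg (B + (A - 2*m))]
  · rintro ⟨hlt, heq⟩
    have : (A - 2*m)^2 = B^2 := by rw [key, heq]; ring
    have h2 : A - 2*m = B := by
      nlinarith [sq_nonneg (B - (A - 2*m)), sq_nonneg (B + (A - 2*m))]
    rw [hx]; linarith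
end

section
/- Let q > 0, 0 < m < 1, h = 1/(4(q+1)), m ≠ 2h, h ≠ 1/4, and s = s₁ = (4h-1)/(2(m-2h)). Then the matrix J = [[1/2-2h, 2h-1/2],[s(2h-m), s(m-2h)]] is nonzero, nilpotent (J² = 0), has trace 0 and determinant 0. -/
/-!
With `a = 1/2 - 2h`, the choice of `s` makes `s (m - 2h) = -a`, so `J = !![a, -a; a, -a]`.
This matrix has trace and determinant zero, hence squares to zero by Cayley–Hamilton, and it is
nonzero because `h ≠ 1/4` means `a ≠ 0`.
-/

namespace Matrix

variable {R : Type*} [CommRing R]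

-- Each entry is an entry of the Cayley–Hamilton identity `A² = (tr A) A - (det A) I`.
theorem sq_eq_zero_of_trace_eq_zero_of_det_eq_zero {A : Matrix (Fin 2) (Fin 2) R}
    (htr : A.trace = 0) (hdet : A.det = 0) : A ^ 2 = 0 := by
  rw [trace_fin_two] at htr
  rw [det_fin_two] at hdet
  ext i j
  fin_cases i <;> fin_cases j <;>
    simp only [sq, mul_apply, Fin.sum_univ_two, Fin.isValue, Fin.mk_one, Fin.zero_eta, zero_apply]
  · linear_combination A 0 0 * htr - hdet
  · linear_combination A 0 1 * htr
  · linear_combination A 1 0 * htr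
  · linear_combination A 1 1 * htr - hdet

end Matrix

theorem stmt_11_general (m h s : ℝ)
    (hm2h : m ≠ 2*h) (hh4 : h ≠ 1/4)
    (hs : s = (4*h - 1)/(2*(m - 2*h)))
    (J : Matrix (Fin 2) (Fin 2) ℝ)
    (hJ : J = !![1/2 - 2*h, 2*h - 1/2; s*(2*h - m), s*(m - 2*h)]) :
    J ≠ 0 ∧ J^2 = 0 ∧ J.trace = 0 ∧ J.det = 0 := by
  have hs' : s * (m - 2*h) = 2*h - 1/2 := by
    have hne : m - 2*h ≠ 0 := sub_ne_zero.mpr hm2h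
    rw [hs, div_mul_eq_mul_div, div_eq_iff (mul_ne_zero two_ne_zero hne)]
    ring
  set a : ℝ := 1/2 - 2*h with ha
  have hJa : J = !![a, -a; a, -a] := by
    rw [hJ]
    ext i j
    fin_cases i <;> fin_cases j <;> simp [a] <;> linarith
  have ha0 : a ≠ 0 := fun h0 => hh4 (by linarith)
  have htr : J.trace = 0 := by simp [hJa, Matrix.trace_fin_two_of]
  have hdet : J.det = 0 := by simp [hJa, Matrix.det_fin_two_of]
  have hJ0 : J ≠ 0 := fun h0 => ha0 (by simpa [hJa] using congr_fun₂ h0 0 0)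
  exact ⟨hJ0, Matrix.sq_eq_zero_of_trace_eq_zero_of_det_eq_zero htr hdet, htr, hdet⟩

theorem stmt_11 (q m h s : ℝ) (hq : 0 < q) (hm : 0 < m) (hm1 : m < 1)
    (hh : h = 1/(4*(q+1))) (hm2h : m ≠ 2*h) (hh4 : h ≠ 1/4)
    (hs : s = (4*h - 1)/(2*(m - 2*h)))
    (J : Matrix (Fin 2) (Fin 2) ℝ)
    (hJ : J = !![1/2 - 2*h, 2*h - 1/2; s*(2*h - m), s*(m - 2*h)]) :
    J ≠ 0 ∧ J^2 = 0 ∧ J.trace = 0 ∧ J.det = 0 :=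
  stmt_11_general m h s hm2h hh4 hs J hJ
end

section
/- Let q > 0, s > 0, 0 < m < 1, Δ₂ > 0, x₈ the larger root of x² - x/(q+1) + h/(q+1) = 0, and consider J = [[-2x₈ - qx₈ + 1, -qx₈],[s(x₈-m), s(m-x₈)]]. Then det J = s(m - x₈)(1 - 2x₈ - 2qx₈) and tr J = s(m - x₈) + (1 - 2x₈ - qx₈). Consequently: if m > x₈ then det J < 0; if m < x₈ then det J > 0, and with s₂ = (2x₈ + qx₈ - 1)/(m - x₈), tr J < 0 when s > s₂, tr J > 0 when s < s₂, and tr J = 0 when s = s₂. -/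
theorem stmt_15 (q s m h : ℝ) (hq : 0 < q) (hs : 0 < s) (hm : 0 < m) (hm1 : m < 1)
    (hh : 0 < h) (Δ₂ : ℝ) (hΔ : Δ₂ = (1/(q+1))^2 - 4*h/(q+1)) (hΔ0 : 0 < Δ₂)
    (x₈ : ℝ) (hx : x₈ = (1/(q+1) + Real.sqrt Δ₂)/2)
    (J : Matrix (Fin 2) (Fin 2) ℝ)
    (hJ : J = !![-2*x₈ - q*x₈ + 1, -q*x₈; s*(x₈ - m), s*(m - x₈)])
    (s₂ : ℝ) (hs₂ : s₂ = (2*x₈ + q*x₈ - 1)/(m - x₈)) :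
    J.det = s*(m - x₈)*(1 - 2*x₈ - 2*q*x₈) ∧
    J.trace = s*(m - x₈) + (1 - 2*x₈ - q*x₈) ∧
    (m > x₈ → J.det < 0) ∧
    (m < x₈ → 0 < J.det ∧
      (s > s₂ → J.trace < 0) ∧ (s < s₂ → 0 < J.trace) ∧ (s = s₂ → J.trace = 0)) := by
  have hq1 : (0:ℝ) < q + 1 := by linarith
  have hsq : 0 < Real.sqrt Δ₂ := Real.sqrt_pos.mpr hΔ0
  have hx8 : 1 - 2*x₈ - 2*q*x₈ < 0 := by
    have h1 : 1/(q+1) < 2*x₈ := by rw [hx]; linarith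
    rw [div_lt_iff₀ hq1] at h1
    nlinarith
  have hdet : J.det = s*(m - x₈)*(1 - 2*x₈ - 2*q*x₈) := by
    rw [hJ, Matrix.det_fin_two]; simp; ring
  have htr : J.trace = s*(m - x₈) + (1 - 2*x₈ - q*x₈) := by
    rw [hJ, Matrix.trace_fin_two]; simp; ring
  refine ⟨hdet, htr, ?_, ?_⟩
  · intro hmx
    rw [hdet]
    have : 0 < m - x₈ := by linarith
    exact mul_neg_of_pos_of_neg (mul_pos hs this) hx8
  · intro hmx
    have hne : m - x₈ < 0 := by linarith
    have hs2 : s₂ * (m - x₈) = 2*x₈ + q*x₈ - 1 := by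
      rw [hs₂, div_mul_cancel₀ _ (by intro h0; apply absurd h0; intro h0'; linarith : m - x₈ ≠ 0)]
    have htr' : J.trace = (m - x₈) * (s - s₂) := by
      rw [htr]; nlinarith [hs2]
    refine ⟨?_, ?_, ?_, ?_⟩
    · rw [hdet]; exact mul_pos_of_neg_of_neg (mul_neg_of_pos_of_neg hs hne) hx8
    · intro hgt; rw [htr']; nlinarith
    · intro hlt; rw [htr']; nlinarith
    · intro heq; rw [htr', heq]; ring
end

section
/- Let q > 0, s > 0, 0 < m < 1, m < x₈, s = s₂ = (2x₈ + qx₈ - 1)/(m - x₈) > 0, where x₈ is the larger root of x² - x/(q+1) + h/(q+1) = 0 with Δ₂ > 0. Then the matrix J = [[-2x₈-qx₈+1, -qx₈],[s(x₈-m), s(m-x₈)]] has trace 0 and positive determinant, hence a pair of purely imaginary nonzero eigenvalues ±i√(det J). -/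
lemma eig2 (A B C μ : ℂ) (hB : B ≠ 0) (hμ : μ^2 = A^2 + B*C) :
    Module.End.HasEigenvalue (Matrix.toLin' (!![A, B; C, -A])) μ := by
  apply Module.End.hasEigenvalue_of_hasEigenvector (x := ![B, μ - A])
  constructor
  · rw [Module.End.mem_eigenspace_iff]
    ext i
    fin_cases i <;>
      simp [Matrix.toLin'_apply, Matrix.mulVec, dotProduct]
    · ring
    · linear_combination -hμ
  · intro hv
    apply hB
    have := congrFun hv 0
    simpa using this

theorem stmt_16 (q s m h : ℝ) (hq : 0 < q) (hs : 0 < s) (hm : 0 < m) (hm1 : m < 1)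
    (hh : 0 < h) (Δ₂ : ℝ) (hΔ : Δ₂ = (1/(q+1))^2 - 4*h/(q+1)) (hΔ0 : 0 < Δ₂)
    (x₈ : ℝ) (hx : x₈ = (1/(q+1) + Real.sqrt Δ₂)/2)
    (hmx : m < x₈) (hs₂ : s = (2*x₈ + q*x₈ - 1)/(m - x₈))
    (J : Matrix (Fin 2) (Fin 2) ℝ)
    (hJ : J = !![-2*x₈ - q*x₈ + 1, -q*x₈; s*(x₈ - m), s*(m - x₈)]) :
    J.trace = 0 ∧ 0 < J.det ∧ Real.sqrt J.det ≠ 0 ∧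
    Module.End.HasEigenvalue (Matrix.toLin' (J.map (Complex.ofReal)))
      (Complex.I * Real.sqrt J.det) ∧
    Module.End.HasEigenvalue (Matrix.toLin' (J.map (Complex.ofReal)))
      (-(Complex.I * Real.sqrt J.det)) := by
  have hx₈ : 0 < x₈ := lt_trans hm hmx
  have hmx' : m - x₈ < 0 := by linarith
  have hne : m - x₈ ≠ 0 := ne_of_lt hmx'
  have hsa : s * (m - x₈) = 2*x₈ + q*x₈ - 1 := by
    rw [hs₂]; field_simp
  have ha : 2*x₈ + q*x₈ - 1 < 0 := by nlinarith
  have hsq : 0 < Real.sqrt Δ₂ := Real.sqrt_pos.mpr hΔ0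
  have hq1 : (0:ℝ) < q + 1 := by linarith
  have haq : 0 < 2*x₈ + q*x₈ - 1 + q*x₈ := by
    have : (2 + 2*q) * x₈ = 1 + (q+1) * Real.sqrt Δ₂ := by
      rw [hx]; field_simp; ring
    nlinarith
  -- J in symmetric form
  have hA : J = !![-2*x₈ - q*x₈ + 1, -q*x₈; s*(x₈ - m), -(-2*x₈ - q*x₈ + 1)] := by
    rw [hJ]
    congr 1
    ext i j
    fin_cases i <;> fin_cases j <;> simp <;> linarith [hsa]
  have htr : J.trace = 0 := by
    rw [hJ, Matrix.trace_fin_two_of]; linarith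
  have hdet : J.det = -(2*x₈ + q*x₈ - 1) * (2*x₈ + q*x₈ - 1 + q*x₈) := by
    rw [hJ, Matrix.det_fin_two_of]
    have hsb : s * (x₈ - m) = -(2*x₈ + q*x₈ - 1) := by linarith [hsa]
    rw [hsa, hsb]; ring
  have hdet0 : 0 < J.det := by rw [hdet]; nlinarith
  have hsd : Real.sqrt J.det ≠ 0 := ne_of_gt (Real.sqrt_pos.mpr hdet0)
  refine ⟨htr, hdet0, hsd, ?_, ?_⟩ <;>
  · have hmap : J.map Complex.ofReal =
        !![((-2*x₈ - q*x₈ + 1 : ℝ) : ℂ), ((-q*x₈ : ℝ) : ℂ);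
           ((s*(x₈ - m) : ℝ) : ℂ), -((-2*x₈ - q*x₈ + 1 : ℝ) : ℂ)] := by
      rw [hA]
      ext i j
      fin_cases i <;> fin_cases j <;> simp
    rw [hmap]
    apply eig2
    · simp only [ne_eq, Complex.ofReal_eq_zero]
      nlinarith
    · have hre : ((-2*x₈ - q*x₈ + 1 : ℝ))^2 + (-q*x₈) * (s*(x₈ - m)) = -J.det := by
        rw [hdet]
        have hsb : s * (x₈ - m) = -(2*x₈ + q*x₈ - 1) := by linarith [hsa]
        rw [hsb]; ring
      have hre' : (((-2*x₈ - q*x₈ + 1 : ℝ) : ℂ))^2 + ((-q*x₈ : ℝ) : ℂ) * ((s*(x₈ - m) : ℝ) : ℂ)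
          = -(J.det : ℂ) := by exact_mod_cast congrArg Complex.ofReal hre
      have hsq2 : ((Real.sqrt J.det : ℝ) : ℂ)^2 = (J.det : ℂ) := by
        rw [← Complex.ofReal_pow, Real.sq_sqrt hdet0.le]
      rw [hre']
      first | rw [neg_sq] | skip
      rw [mul_pow, Complex.I_sq, hsq2]
      ring
end
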